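/- For a connected graph G, the Laplacian L and resistance matrix R satisfy L + (1/2)·L·R·L = 0; in other words, −(1/2)R is a generalized inverse of L. -/

import Mathlib

open scoped Classical
open Matrix

/-- A finite multigraph without loop edges, given by endpoint maps on an edge type. -/
structure Multigraph where
  V : Type
  E : Type
  [fintV : Fintype V]
  [fintE : Fintype E]
  fst : E → V
  snd : E → V
  no_loop : ∀ e, fst e ≠ snd e

namespace Multigraph

variable (G : Multigraph)

instance : Fintype G.V := G.fintV
instance : Fintype G.E := G.fintE

/-- One step along an edge of the subgraph with edge set `S`. -/
def step (S : Finset G.E) (u v : G.V) : Prop :=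
  ∃ e ∈ S, (G.fst e = u ∧ G.snd e = v) ∨ (G.fst e = v ∧ G.snd e = u)

/-- Two vertices are in the same component of the spanning subgraph with edge set `S`. -/
def reach (S : Finset G.E) : G.V → G.V → Prop :=
  Relation.EqvGen (G.step S)

/-- Number of connected components of the spanning subgraph with edge set `S`. -/
noncomputable def ncomp (S : Finset G.E) : ℕ :=
  Nat.card (Quotient (Relation.EqvGen.setoid (G.step S)))

/-- The graph is connected. -/
def IsConnected : Prop := G.ncomp Finset.univ = 1

/-- `S` is the edge set of a spanning tree. -/
def IsSpanningTree (S : Finset G.E) : Prop :=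
  G.ncomp S = 1 ∧ S.card + 1 = Fintype.card G.V

/-- `S` is the edge set of a two-component spanning forest. -/
def IsTwoForest (S : Finset G.E) : Prop :=
  G.ncomp S = 2 ∧ S.card + 2 = Fintype.card G.V

/-- `S` is the edge set of a three-component spanning forest. -/
def IsThreeForest (S : Finset G.E) : Prop :=
  G.ncomp S = 3 ∧ S.card + 3 = Fintype.card G.V

/-- κ(G): number of spanning trees. -/
noncomputable def kappa : ℕ := Nat.card {S : Finset G.E // G.IsSpanningTree S}

/-- κ₂(G): number of two-component spanning forests. -/
noncomputable def kappa2 : ℕ := Nat.card {S : Finset G.E // G.IsTwoForest S}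

/-- κ₂(x|y): number of two-forests with `x` and `y` in different components. -/
noncomputable def kappa2Sep (x y : G.V) : ℕ :=
  Nat.card {S : Finset G.E // G.IsTwoForest S ∧ ¬ G.reach S x y}

/-- κ₂(xy|q): number of two-forests with `x`, `y` in one component, `q` in the other. -/
noncomputable def kappa2Tog (x y q : G.V) : ℕ :=
  Nat.card {S : Finset G.E // G.IsTwoForest S ∧ G.reach S x y ∧ ¬ G.reach S x q}

/-- κ₃(x|y|q): number of three-forests with `x`, `y`, `q` in pairwise distinct components. -/
noncomputable def kappa3Sep (x y q : G.V) : ℕ :=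
  Nat.card {S : Finset G.E //
    G.IsThreeForest S ∧ ¬ G.reach S x y ∧ ¬ G.reach S x q ∧ ¬ G.reach S y q}

/-- Effective resistance: r(x,y) = κ₂(x|y)/κ(G). -/
noncomputable def res (x y : G.V) : ℝ := (G.kappa2Sep x y : ℝ) / (G.kappa : ℝ)

/-- Potential kernel: j_q(x,y) = κ₂(xy|q)/κ(G). -/
noncomputable def jfun (q x y : G.V) : ℝ := (G.kappa2Tog x y q : ℝ) / (G.kappa : ℝ)

/-- Cut size |∂F| of a two-forest with edge set `S`: edges joining the two components. -/
noncomputable def cutSize (S : Finset G.E) : ℕ :=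
  Nat.card {e : G.E // ¬ G.reach S (G.fst e) (G.snd e)}

/-- The curvature vector μ. -/
noncomputable def mu (x : G.V) : ℝ :=
  1 - (1/2) * ∑ e : G.E,
    (if G.fst e = x ∨ G.snd e = x then G.res (G.fst e) (G.snd e) else 0)

/-- The Laplacian matrix of `G`. -/
noncomputable def lap : Matrix G.V G.V ℝ := fun v w =>
  (if v = w then (Nat.card {e : G.E // G.fst e = v ∨ G.snd e = v} : ℝ) else 0)
    - (Nat.card {e : G.E // (G.fst e = v ∧ G.snd e = w) ∨ (G.fst e = w ∧ G.snd e = v)} : ℝ)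

/-- The effective resistance matrix of `G`. -/
noncomputable def resMatrix : Matrix G.V G.V ℝ := fun v w => G.res v w

variable {G}

lemma reach_refl (S : Finset G.E) (u : G.V) : G.reach S u u := Relation.EqvGen.refl u

lemma reach_symm {S : Finset G.E} {u v : G.V} (h : G.reach S u v) : G.reach S v u :=
  Relation.EqvGen.symm _ _ h

lemma reach_trans {S : Finset G.E} {u v w : G.V} (h : G.reach S u v) (h' : G.reach S v w) :
    G.reach S u w := Relation.EqvGen.trans _ _ _ h h'

lemma reach_of_step {S : Finset G.E} {u v : G.V} (h : G.step S u v) : G.reach S u v :=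
  Relation.EqvGen.rel _ _ h

lemma step_mono {S S' : Finset G.E} (h : S ⊆ S') {u v : G.V} (hs : G.step S u v) :
    G.step S' u v := by obtain ⟨e, he, hc⟩ := hs; exact ⟨e, h he, hc⟩

lemma reach_mono {S S' : Finset G.E} (h : S ⊆ S') {u v : G.V} (hs : G.reach S u v) :
    G.reach S' u v := Relation.EqvGen.mono (fun _ _ => step_mono h) _ _ hs

lemma reach_edge {S : Finset G.E} {e : G.E} (he : e ∈ S) :
    G.reach S (G.fst e) (G.snd e) := reach_of_step ⟨e, he, Or.inl ⟨rfl, rfl⟩⟩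

/-- Splitting reach over an inserted edge. -/
lemma reach_insert_iff {S : Finset G.E} {e : G.E} {u v : G.V} :
    G.reach (insert e S) u v ↔ G.reach S u v ∨
      (G.reach S u (G.fst e) ∧ G.reach S (G.snd e) v) ∨
      (G.reach S u (G.snd e) ∧ G.reach S (G.fst e) v) := by
  constructor
  · intro h
    induction h with
    | rel a b hab =>
      obtain ⟨e', he', hc⟩ := hab
      rcases Finset.mem_insert.mp he' with rfl | he'
      · rcases hc with ⟨h1, h2⟩ | ⟨h1, h2⟩
        · exact Or.inr (Or.inl ⟨h1 ▸ reach_refl S _, h2 ▸ reach_refl S _⟩)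
        · exact Or.inr (Or.inr ⟨h2 ▸ reach_refl S _, h1 ▸ reach_refl S _⟩)
      · exact Or.inl (reach_of_step ⟨e', he', hc⟩)
    | refl a => exact Or.inl (reach_refl S a)
    | symm a b _ ih =>
      rcases ih with h | ⟨h1, h2⟩ | ⟨h1, h2⟩
      · exact Or.inl (reach_symm h)
      · exact Or.inr (Or.inr ⟨reach_symm h2, reach_symm h1⟩)
      · exact Or.inr (Or.inl ⟨reach_symm h2, reach_symm h1⟩)
    | trans a b c _ _ ih1 ih2 =>
      rcases ih1 with h | ⟨h1, h2⟩ | ⟨h1, h2⟩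
      · rcases ih2 with h' | ⟨h1', h2'⟩ | ⟨h1', h2'⟩
        · exact Or.inl (reach_trans h h')
        · exact Or.inr (Or.inl ⟨reach_trans h h1', h2'⟩)
        · exact Or.inr (Or.inr ⟨reach_trans h h1', h2'⟩)
      · rcases ih2 with h' | ⟨h1', h2'⟩ | ⟨h1', h2'⟩
        · exact Or.inr (Or.inl ⟨h1, reach_trans h2 h'⟩)
        · exact Or.inr (Or.inl ⟨h1, h2'⟩)
        · exact Or.inl (reach_trans h1 h2')
      · rcases ih2 with h' | ⟨h1', h2'⟩ | ⟨h1', h2'⟩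
        · exact Or.inr (Or.inr ⟨h1, reach_trans h2 h'⟩)
        · exact Or.inl (reach_trans h1 h2')
        · exact Or.inr (Or.inr ⟨h1, h2'⟩)
  · rintro (h | ⟨h1, h2⟩ | ⟨h1, h2⟩)
    · exact reach_mono (Finset.subset_insert e S) h
    · exact reach_trans (reach_mono (Finset.subset_insert e S) h1)
        (reach_trans (reach_edge (Finset.mem_insert_self e S))
          (reach_mono (Finset.subset_insert e S) h2))
    · exact reach_trans (reach_mono (Finset.subset_insert e S) h1)
        (reach_trans (reach_symm (reach_edge (Finset.mem_insert_self e S)))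
          (reach_mono (Finset.subset_insert e S) h2))


lemma reach_empty {u v : G.V} (h : G.reach (∅ : Finset G.E) u v) : u = v := by
  induction h with
  | rel a b hab => exact absurd hab.choose_spec.1 (Finset.notMem_empty _)
  | refl a => rfl
  | symm a b _ ih => exact ih.symm
  | trans a b c _ _ ih1 ih2 => exact ih1.trans ih2

lemma ncomp_empty : G.ncomp (∅ : Finset G.E) = Fintype.card G.V := by
  unfold ncomp
  rw [← Nat.card_eq_fintype_card]
  refine (Nat.card_congr (Equiv.ofBijective (Quotient.mk _) ⟨fun a b h => ?_, fun z => z.exists_rep⟩)).symm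
  exact reach_empty (Quotient.exact h)

lemma ncomp_insert_of_reach {S : Finset G.E} {e : G.E}
    (h : G.reach S (G.fst e) (G.snd e)) : G.ncomp (insert e S) = G.ncomp S := by
  unfold ncomp
  refine Nat.card_congr (Quotient.congrRight fun a b => ?_).symm
  show G.reach S a b ↔ G.reach (insert e S) a b
  constructor
  · exact reach_mono (Finset.subset_insert e S)
  · intro hr
    rcases reach_insert_iff.mp hr with h' | ⟨h1, h2⟩ | ⟨h1, h2⟩
    · exact h'
    · exact reach_trans h1 (reach_trans h h2)
    · exact reach_trans h1 (reach_trans (reach_symm h) h2)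

lemma ncomp_insert_of_not_reach {S : Finset G.E} {e : G.E}
    (hab : ¬ G.reach S (G.fst e) (G.snd e)) :
    G.ncomp (insert e S) + 1 = G.ncomp S := by
  classical
  set s := Relation.EqvGen.setoid (G.step S) with hs
  set s' := Relation.EqvGen.setoid (G.step (insert e S)) with hs'
  let f : Quotient s → Quotient s' :=
    Quotient.map' id (fun a b h => Relation.EqvGen.mono (fun _ _ => step_mono (Finset.subset_insert e S)) _ _ h)
  have key : Function.Bijective
      (fun z : {z : Quotient s // z ≠ Quotient.mk s (G.snd e)} => f z.1) := by
    constructor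
    · rintro ⟨z1, hz1⟩ ⟨z2, hz2⟩ hz
      obtain ⟨a, rfl⟩ := z1.exists_rep
      obtain ⟨b, rfl⟩ := z2.exists_rep
      have : G.reach (insert e S) a b := Quotient.exact' hz
      rcases reach_insert_iff.mp this with h' | ⟨h1, h2⟩ | ⟨h1, h2⟩
      · exact Subtype.ext (Quotient.sound h')
      · exact absurd (Quotient.sound h2 : Quotient.mk s (G.snd e) = _).symm hz2
      · exact absurd (Quotient.sound h1 : Quotient.mk s a = _) hz1
    · intro z
      obtain ⟨v, rfl⟩ := z.exists_rep
      by_cases hv : G.reach S v (G.snd e)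
      · refine ⟨⟨Quotient.mk s (G.fst e), fun hc => hab (Quotient.exact hc)⟩, ?_⟩
        show Quotient.mk s' (G.fst e) = Quotient.mk s' v
        exact Quotient.sound (reach_symm (reach_trans
          (reach_mono (Finset.subset_insert e S) hv)
          (reach_symm (reach_edge (Finset.mem_insert_self e S)))))
      · refine ⟨⟨Quotient.mk s v, fun hc => hv (Quotient.exact hc)⟩, rfl⟩
  have h1 : Nat.card (Quotient s') = Nat.card {z : Quotient s // z ≠ Quotient.mk s (G.snd e)} :=
    (Nat.card_congr (Equiv.ofBijective _ key)).symm
  have h2 : Fintype.card {z : Quotient s // z ≠ Quotient.mk s (G.snd e)}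
      = Fintype.card (Quotient s) - 1 := by
    rw [Fintype.card_subtype_compl, Fintype.card_subtype_eq]
  show Nat.card (Quotient s') + 1 = Nat.card (Quotient s)
  rw [h1, Nat.card_eq_fintype_card, Nat.card_eq_fintype_card, h2]
  have : 0 < Fintype.card (Quotient s) := Fintype.card_pos_iff.mpr ⟨Quotient.mk s (G.snd e)⟩
  omega

lemma reach_of_ncomp_le_one {S : Finset G.E} (h : G.ncomp S ≤ 1) (u v : G.V) :
    G.reach S u v := by
  have := Finite.card_le_one_iff_subsingleton.mp h
  exact Quotient.exact (Subsingleton.elim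
    (Quotient.mk (Relation.EqvGen.setoid (G.step S)) u) (Quotient.mk _ v))

lemma reach_of_ncomp_le_two {S : Finset G.E} (h : G.ncomp S ≤ 2) {a b c : G.V}
    (hab : ¬ G.reach S a b) (hac : ¬ G.reach S a c) : G.reach S b c := by
  by_contra hbc
  set s := Relation.EqvGen.setoid (G.step S) with hs
  have hcard : ({Quotient.mk s a, Quotient.mk s b, Quotient.mk s c} : Finset (Quotient s)).card = 3 := by
    rw [Finset.card_insert_of_notMem, Finset.card_insert_of_notMem, Finset.card_singleton]
    · simp only [Finset.mem_singleton]
      exact fun hc' => hbc (Quotient.exact hc')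
    · simp only [Finset.mem_insert, Finset.mem_singleton]
      rintro (hc' | hc')
      · exact hab (Quotient.exact hc')
      · exact hac (Quotient.exact hc')
  have : (3 : ℕ) ≤ G.ncomp S := by
    unfold ncomp
    rw [Nat.card_eq_fintype_card, ← Finset.card_univ, ← hcard]
    exact Finset.card_le_card (Finset.subset_univ _)
  omega

lemma le_ncomp_add_card (S : Finset G.E) :
    Fintype.card G.V ≤ G.ncomp S + S.card := by
  classical
  induction S using Finset.induction_on with
  | empty => simp [ncomp_empty]
  | @insert e S he ih =>
    rw [Finset.card_insert_of_notMem he]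
    by_cases h : G.reach S (G.fst e) (G.snd e)
    · rw [ncomp_insert_of_reach h]; omega
    · have := ncomp_insert_of_not_reach h
      omega



lemma tree_erase {T : Finset G.E} (hT : G.IsSpanningTree T) {e : G.E} (he : e ∈ T) :
    G.IsTwoForest (T.erase e) ∧ ¬ G.reach (T.erase e) (G.fst e) (G.snd e) := by
  obtain ⟨h1, h2⟩ := hT
  have hins : insert e (T.erase e) = T := Finset.insert_erase he
  have hc : 1 ≤ T.card := Finset.card_pos.mpr ⟨e, he⟩
  have hcard : (T.erase e).card = T.card - 1 := Finset.card_erase_of_mem he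
  have hge := le_ncomp_add_card (G := G) (T.erase e)
  have hnr : ¬ G.reach (T.erase e) (G.fst e) (G.snd e) := by
    intro hr
    have := ncomp_insert_of_reach hr
    rw [hins, h1] at this
    omega
  have h3 := ncomp_insert_of_not_reach hnr
  rw [hins, h1] at h3
  exact ⟨⟨by omega, by omega⟩, hnr⟩

lemma forest_insert {S : Finset G.E} (hS : G.IsTwoForest S) {e : G.E}
    (hnr : ¬ G.reach S (G.fst e) (G.snd e)) :
    G.IsSpanningTree (insert e S) ∧ e ∉ S := by
  have heS : e ∉ S := fun he => hnr (reach_edge he)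
  have h3 := ncomp_insert_of_not_reach hnr
  rw [hS.1] at h3
  refine ⟨⟨by omega, ?_⟩, heS⟩
  rw [Finset.card_insert_of_notMem heS]
  have := hS.2
  omega

lemma bridges_acyclic (S : Finset G.E)
    (hS : ∀ e ∈ S, ¬ G.reach (S.erase e) (G.fst e) (G.snd e)) :
    G.ncomp S + S.card = Fintype.card G.V := by
  induction S using Finset.strongInductionOn with
  | _ S ih =>
    rcases S.eq_empty_or_nonempty with rfl | ⟨e, he⟩
    · simp [ncomp_empty]
    · have h1 : insert e (S.erase e) = S := Finset.insert_erase he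
      have h3 := ncomp_insert_of_not_reach (hS e he)
      rw [h1] at h3
      have h4 := ih (S.erase e) (Finset.erase_ssubset he) (fun e' he' hc =>
        hS e' (Finset.mem_of_mem_erase he')
          (reach_mono (Finset.erase_subset_erase e' (Finset.erase_subset e S)) hc))
      have h5 : 1 ≤ S.card := Finset.card_pos.mpr ⟨e, he⟩
      rw [Finset.card_erase_of_mem he] at h4
      omega

lemma exists_spanning_forest (S : Finset G.E) :
    ∃ S', S' ⊆ S ∧ G.ncomp S' = G.ncomp S ∧ G.ncomp S' + S'.card = Fintype.card G.V := by
  induction S using Finset.strongInductionOn with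
  | _ S ih =>
    by_cases hb : ∀ e ∈ S, ¬ G.reach (S.erase e) (G.fst e) (G.snd e)
    · exact ⟨S, subset_rfl, rfl, bridges_acyclic S hb⟩
    · push_neg at hb
      obtain ⟨e, he, hr⟩ := hb
      have h1 : insert e (S.erase e) = S := Finset.insert_erase he
      have h2 : G.ncomp (S.erase e) = G.ncomp S := by
        have := ncomp_insert_of_reach hr
        rw [h1] at this
        exact this.symm
      obtain ⟨S', hs1, hs2, hs3⟩ := ih (S.erase e) (Finset.erase_ssubset he)
      exact ⟨S', hs1.trans (Finset.erase_subset e S), by rw [hs2, h2], hs3⟩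

lemma exists_spanning_tree (hG : G.ncomp Finset.univ = 1) : ∃ T, G.IsSpanningTree T := by
  obtain ⟨T, _, h2, h3⟩ := exists_spanning_forest (G := G) Finset.univ
  rw [hG] at h2
  exact ⟨T, h2, by omega⟩


variable (G) in
def inc (e : G.E) (x : G.V) : Prop := G.fst e = x ∨ G.snd e = x

variable (G) in
noncomputable def oth (e : G.E) (x : G.V) : G.V := if G.fst e = x then G.snd e else G.fst e

lemma oth_ne {e : G.E} {x : G.V} (h : G.inc e x) : G.oth e x ≠ x := by
  unfold oth
  split
  · next h' => rw [← h']; exact (G.no_loop e).symm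
  · next h' => exact h'

lemma endpoints_eq {e : G.E} {x : G.V} (h : G.inc e x) :
    (G.fst e = x ∧ G.snd e = G.oth e x) ∨ (G.fst e = G.oth e x ∧ G.snd e = x) := by
  unfold oth
  rcases h with h | h
  · left; rw [if_pos h]; exact ⟨h, rfl⟩
  · by_cases h' : G.fst e = x
    · left; rw [if_pos h']; exact ⟨h', rfl⟩
    · right; rw [if_neg h']; exact ⟨rfl, h⟩

lemma reach_oth_iff {S : Finset G.E} {e : G.E} {x : G.V} (h : G.inc e x) :
    G.reach S (G.fst e) (G.snd e) ↔ G.reach S x (G.oth e x) := by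
  rcases endpoints_eq h with ⟨h1, h2⟩ | ⟨h1, h2⟩
  · rw [h1, h2]
  · rw [h1, h2]; exact ⟨fun hr => reach_symm hr, fun hr => reach_symm hr⟩

lemma reach_edge_oth {S : Finset G.E} {e : G.E} {x : G.V} (he : e ∈ S) (h : G.inc e x) :
    G.reach S x (G.oth e x) := (reach_oth_iff h).mp (reach_edge he)

/-- Symmetrized version of `reach_insert_iff` pivoting at an endpoint `x` of `e`. -/
lemma reach_insert_iff' {S : Finset G.E} {e : G.E} {x u v : G.V} (hx : G.inc e x) :
    G.reach (insert e S) u v ↔ G.reach S u v ∨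
      (G.reach S u x ∧ G.reach S (G.oth e x) v) ∨
      (G.reach S u (G.oth e x) ∧ G.reach S x v) := by
  rcases endpoints_eq hx with ⟨h1, h2⟩ | ⟨h1, h2⟩
  · rw [reach_insert_iff, h1, h2]
  · rw [reach_insert_iff, h1, h2]
    tauto

lemma reach_decomp {S : Finset G.E} {x q : G.V} (h : G.reach S x q) :
    x = q ∨ ∃ v, G.step S x v ∧ G.reach S v q := by
  have main : ∀ a b : G.V, G.reach S a b →
      (a = b ∨ ∃ v, G.step S a v ∧ G.reach S v b) ∧
      (b = a ∨ ∃ v, G.step S b v ∧ G.reach S v a) := by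
    intro a b hab
    induction hab with
    | rel a b hab =>
      have hba : G.step S b a := by obtain ⟨e, he, hc⟩ := hab; exact ⟨e, he, hc.symm⟩
      exact ⟨Or.inr ⟨b, hab, reach_refl S b⟩, Or.inr ⟨a, hba, reach_refl S a⟩⟩
    | refl a => exact ⟨Or.inl rfl, Or.inl rfl⟩
    | symm a b h ih => exact ⟨ih.2, ih.1⟩
    | trans a b c hab hbc ih1 ih2 =>
      constructor
      · rcases ih1.1 with rfl | ⟨v, hv1, hv2⟩
        · exact ih2.1
        · exact Or.inr ⟨v, hv1, reach_trans hv2 hbc⟩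
      · rcases ih2.2 with rfl | ⟨v, hv1, hv2⟩
        · exact ih1.2
        · exact Or.inr ⟨v, hv1, reach_trans hv2 (reach_symm hab)⟩
  exact (main x q h).1

lemma acyclic_erase {S : Finset G.E} (hS : G.ncomp S + S.card = Fintype.card G.V)
    {e : G.E} (he : e ∈ S) :
    (G.ncomp (S.erase e) + (S.erase e).card = Fintype.card G.V) ∧
      ¬ G.reach (S.erase e) (G.fst e) (G.snd e) := by
  have hins : insert e (S.erase e) = S := Finset.insert_erase he
  have hc : 1 ≤ S.card := Finset.card_pos.mpr ⟨e, he⟩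
  have hcard : (S.erase e).card = S.card - 1 := Finset.card_erase_of_mem he
  have hge := le_ncomp_add_card (G := G) (S.erase e)
  have hnr : ¬ G.reach (S.erase e) (G.fst e) (G.snd e) := by
    intro hr
    have := ncomp_insert_of_reach hr
    rw [hins] at this
    omega
  have h3 := ncomp_insert_of_not_reach hnr
  rw [hins] at h3
  exact ⟨by omega, hnr⟩

lemma exists_sep_edge (S : Finset G.E) (hS : G.ncomp S + S.card = Fintype.card G.V)
    {x q : G.V} (hxq : G.reach S x q) (hne : x ≠ q) :
    ∃ e ∈ S, G.inc e x ∧ ¬ G.reach (S.erase e) x q := by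
  induction S using Finset.strongInductionOn with
  | _ S ih =>
    rcases reach_decomp hxq with rfl | ⟨v, hstep, hvq⟩
    · exact absurd rfl hne
    obtain ⟨e₁, he₁, hc⟩ := hstep
    have hinc₁ : G.inc e₁ x := by rcases hc with ⟨h1, _⟩ | ⟨_, h2⟩; exacts [Or.inl h1, Or.inr h2]
    by_cases hrq : G.reach (S.erase e₁) x q
    · -- recurse
      have hacy₁ := (acyclic_erase hS he₁).1
      obtain ⟨e, he, hince, hnee⟩ := ih (S.erase e₁) (Finset.erase_ssubset he₁) hacy₁ hrq
      refine ⟨e, Finset.mem_of_mem_erase he, hince, ?_⟩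
      intro hre
      -- notation
      set w₁ := G.oth e₁ x with hw₁
      set w₂ := G.oth e x with hw₂
      have hene₁ : e ≠ e₁ := Finset.ne_of_mem_erase he
      have hS' : ((S.erase e₁).erase e) = ((S.erase e).erase e₁) := Finset.erase_right_comm
      have he₁mem : e₁ ∈ S.erase e := Finset.mem_erase.mpr ⟨hene₁.symm, he₁⟩
      have hins1 : insert e₁ ((S.erase e₁).erase e) = S.erase e := by
        rw [hS']; exact Finset.insert_erase he₁mem
      have hins2 : insert e ((S.erase e₁).erase e) = S.erase e₁ := Finset.insert_erase he
      have hacy₂ := (acyclic_erase hS (Finset.mem_of_mem_erase he)).1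
      have f1 : ¬ G.reach ((S.erase e₁).erase e) x w₁ := by
        have h0 := (acyclic_erase hacy₂ he₁mem).2
        rw [reach_oth_iff hinc₁] at h0
        rw [hS']
        exact h0
      -- from hre get hw1q
      have hre' : G.reach (insert e₁ ((S.erase e₁).erase e)) x q := by rw [hins1]; exact hre
      have hw1q : G.reach ((S.erase e₁).erase e) w₁ q := by
        rcases (reach_insert_iff' hinc₁).mp hre' with h' | ⟨h1, h2⟩ | ⟨h1, h2⟩
        · exact absurd h' hnee
        · exact h2
        · exact absurd h1 f1
      -- from hrq get hw2q
      have hrq' : G.reach (insert e ((S.erase e₁).erase e)) x q := by rw [hins2]; exact hrq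
      have hw2q : G.reach ((S.erase e₁).erase e) w₂ q := by
        rcases (reach_insert_iff' hince).mp hrq' with h' | ⟨h1, h2⟩ | ⟨h1, h2⟩
        · exact absurd h' hnee
        · exact h2
        · exact absurd h2 hnee
      -- counting contradiction
      have hsub : ((S.erase e₁).erase e) ⊆ S.erase e₁ := Finset.erase_subset e (S.erase e₁)
      have hxw₁ : G.reach (S.erase e₁) x w₁ := by
        refine reach_trans (reach_edge_oth he hince) ?_
        exact reach_trans (reach_mono hsub hw2q) (reach_symm (reach_mono hsub hw1q))
      have hrfs : G.reach (S.erase e₁) (G.fst e₁) (G.snd e₁) := (reach_oth_iff hinc₁).mpr hxw₁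
      have hcomp := ncomp_insert_of_reach hrfs
      rw [Finset.insert_erase he₁] at hcomp
      have hcard₁ : (S.erase e₁).card = S.card - 1 := Finset.card_erase_of_mem he₁
      have hc1 : 1 ≤ S.card := Finset.card_pos.mpr ⟨e₁, he₁⟩
      have := (acyclic_erase hS he₁).1
      omega
    · exact ⟨e₁, he₁, hinc₁, hrq⟩


lemma tree_sep_unique {T : Finset G.E} (hT : G.IsSpanningTree T) {x q : G.V}
    {e₁ e₂ : G.E} (he₁ : e₁ ∈ T) (he₂ : e₂ ∈ T) (hne : e₁ ≠ e₂)
    (hinc₁ : G.inc e₁ x) (hinc₂ : G.inc e₂ x)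
    (hsep₁ : ¬ G.reach (T.erase e₁) x q) (hsep₂ : ¬ G.reach (T.erase e₂) x q) : False := by
  have hacy : G.ncomp T + T.card = Fintype.card G.V := by
    rw [hT.1]; have := hT.2; omega
  have he₂mem : e₂ ∈ T.erase e₁ := Finset.mem_erase.mpr ⟨hne.symm, he₂⟩
  have he₁mem : e₁ ∈ T.erase e₂ := Finset.mem_erase.mpr ⟨hne, he₁⟩
  have hcomm : (T.erase e₁).erase e₂ = (T.erase e₂).erase e₁ := Finset.erase_right_comm
  set w₁ := G.oth e₁ x
  set w₂ := G.oth e₂ x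
  -- Step A
  have hacy₁ := (acyclic_erase hacy he₁).1
  have hA₁ : ¬ G.reach ((T.erase e₁).erase e₂) x w₂ := by
    have h0 := (acyclic_erase hacy₁ he₂mem).2
    rwa [reach_oth_iff hinc₂] at h0
  have hacy₂ := (acyclic_erase hacy he₂).1
  have hA₂ : ¬ G.reach ((T.erase e₁).erase e₂) x w₁ := by
    have h0 := (acyclic_erase hacy₂ he₁mem).2
    rw [reach_oth_iff hinc₁] at h0
    rwa [hcomm]
  -- Step B : reach (T.erase e₁) w₁ q
  have hxq : G.reach T x q := reach_of_ncomp_le_one (le_of_eq hT.1) x q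
  have hxq' : G.reach (insert e₁ (T.erase e₁)) x q := by
    rw [Finset.insert_erase he₁]; exact hxq
  have hB : G.reach (T.erase e₁) w₁ q := by
    rcases (reach_insert_iff' hinc₁).mp hxq' with h' | ⟨h1, h2⟩ | ⟨h1, h2⟩
    · exact absurd h' hsep₁
    · exact h2
    · exact absurd h2 hsep₁
  -- Step C : reach ((T.erase e₁).erase e₂) w₁ q
  have hB' : G.reach (insert e₂ ((T.erase e₁).erase e₂)) w₁ q := by
    rw [Finset.insert_erase he₂mem]; exact hB
  have hC : G.reach ((T.erase e₁).erase e₂) w₁ q := by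
    rcases (reach_insert_iff' hinc₂).mp hB' with h' | ⟨h1, h2⟩ | ⟨h1, h2⟩
    · exact h'
    · exact absurd (reach_symm h1) hA₂
    · exact absurd (reach_mono (Finset.erase_subset _ _) h2) hsep₁
  -- Step D : contradiction with hsep₂
  apply hsep₂
  refine reach_trans (reach_edge_oth he₁mem hinc₁) ?_
  refine reach_mono ?_ hC
  rw [hcomm]
  exact Finset.erase_subset e₁ (T.erase e₂)

lemma tree_count {T : Finset G.E} (hT : G.IsSpanningTree T) (x q : G.V) :
    (Finset.univ.filter (fun e : G.E =>
      e ∈ T ∧ G.inc e x ∧ ¬ G.reach (T.erase e) x q)).card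
      = if x = q then 0 else 1 := by
  split
  · next h =>
    subst h
    rw [Finset.card_eq_zero, Finset.filter_eq_empty_iff]
    intro e _
    rintro ⟨_, _, hc⟩
    exact hc (reach_refl _ x)
  · next h =>
    rw [Finset.card_eq_one]
    have hacy : G.ncomp T + T.card = Fintype.card G.V := by
      rw [hT.1]; have := hT.2; omega
    have hxq : G.reach T x q := reach_of_ncomp_le_one (le_of_eq hT.1) x q
    obtain ⟨e, he, hinc, hsep⟩ := exists_sep_edge T hacy hxq h
    refine ⟨e, Finset.eq_singleton_iff_unique_mem.mpr ⟨?_, ?_⟩⟩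
    · simp only [Finset.mem_filter, Finset.mem_univ, true_and]
      exact ⟨he, hinc, hsep⟩
    · intro e' he'
      simp only [Finset.mem_filter, Finset.mem_univ, true_and] at he'
      obtain ⟨he'1, he'2, he'3⟩ := he'
      by_contra hne
      exact tree_sep_unique hT he'1 he hne he'2 hinc he'3 hsep



noncomputable def ind (c : Prop) : ℝ := if c then 1 else 0

lemma ind_pos {c : Prop} (h : c) : ind c = 1 := if_pos h
lemma ind_neg {c : Prop} (h : ¬ c) : ind c = 0 := if_neg h
lemma ind_nonneg {c : Prop} : 0 ≤ ind c := by unfold ind; split <;> norm_num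

lemma ind_congr {c d : Prop} (h : c ↔ d) : ind c = ind d := by
  by_cases hc : c
  · rw [ind_pos hc, ind_pos (h.mp hc)]
  · rw [ind_neg hc, ind_neg (fun hd => hc (h.mpr hd))]

lemma natCard_eq_sum {α : Type*} [Fintype α] (p : α → Prop) :
    (Nat.card {a // p a} : ℝ) = ∑ a, ind (p a) := by
  classical
  rw [Nat.card_eq_fintype_card, Fintype.card_subtype, Finset.card_filter]
  push_cast
  exact Finset.sum_congr rfl (fun a _ => by by_cases h : p a <;> simp [ind, h])

lemma natCard_eq_filter {α : Type*} [Fintype α] (p : α → Prop) :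
    Nat.card {a // p a} = (Finset.univ.filter p).card := by
  classical
  rw [Nat.card_eq_fintype_card, Fintype.card_subtype]

lemma sum_ind_eq {α : Type*} [Fintype α] (x : α) (g : α → ℝ) :
    ∑ z, ind (x = z) * g z = g x := by
  classical
  have : ∀ z, ind (x = z) * g z = if x = z then g z else 0 := by
    intro z; by_cases h : x = z <;> simp [ind, h]
  rw [Finset.sum_congr rfl (fun z _ => this z), Finset.sum_ite_eq]
  simp

lemma lap_apply (x z : G.V) :
    G.lap x z = ind (x = z) * (∑ e, ind (G.inc e x))
      - ∑ e, ind ((G.fst e = x ∧ G.snd e = z) ∨ (G.fst e = z ∧ G.snd e = x)) := by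
  unfold lap
  rw [natCard_eq_sum, natCard_eq_sum]
  by_cases h : x = z <;> simp [ind, inc, h]

lemma edge_sum (e : G.E) (x : G.V) (f : G.V → ℝ) :
    (∑ z, ind ((G.fst e = x ∧ G.snd e = z) ∨ (G.fst e = z ∧ G.snd e = x)) * f z)
      = ind (G.inc e x) * f (G.oth e x) := by
  by_cases h : G.inc e x
  · rw [ind_pos h, one_mul]
    have key : ∀ z, ((G.fst e = x ∧ G.snd e = z) ∨ (G.fst e = z ∧ G.snd e = x)) ↔ G.oth e x = z := by
      intro z
      rcases endpoints_eq h with ⟨h1, h2⟩ | ⟨h1, h2⟩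
      · constructor
        · rintro (⟨_, hz⟩ | ⟨hz, hx⟩)
          · exact h2.symm.trans hz
          · exact absurd (h2.symm.trans hx) (oth_ne h)
        · rintro rfl; exact Or.inl ⟨h1, h2⟩
      · constructor
        · rintro (⟨hx, _⟩ | ⟨hz, _⟩)
          · exact absurd (h1.symm.trans hx) (oth_ne h)
          · exact h1.symm.trans hz
        · rintro rfl; exact Or.inr ⟨h1, h2⟩
    rw [Finset.sum_congr rfl (fun z (_ : z ∈ Finset.univ) => by rw [ind_congr (key z)])]
    exact sum_ind_eq (G.oth e x) f
  · rw [ind_neg h, zero_mul]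
    refine Finset.sum_eq_zero (fun z _ => ?_)
    have : ¬ ((G.fst e = x ∧ G.snd e = z) ∨ (G.fst e = z ∧ G.snd e = x)) := by
      rintro (⟨h1, _⟩ | ⟨_, h2⟩)
      · exact h (Or.inl h1)
      · exact h (Or.inr h2)
    rw [ind_neg this, zero_mul]

lemma lap_row_sum (x : G.V) (f : G.V → ℝ) :
    ∑ z, G.lap x z * f z = ∑ e, ind (G.inc e x) * (f x - f (G.oth e x)) := by
  have expand : ∀ z, G.lap x z * f z =
      ind (x = z) * (∑ e, ind (G.inc e x) * f z)
      - ∑ e, ind ((G.fst e = x ∧ G.snd e = z) ∨ (G.fst e = z ∧ G.snd e = x)) * f z := by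
    intro z
    rw [lap_apply, sub_mul, mul_assoc, Finset.sum_mul, Finset.sum_mul]
  rw [Finset.sum_congr rfl (fun z _ => expand z), Finset.sum_sub_distrib]
  rw [sum_ind_eq x (fun z => ∑ e, ind (G.inc e x) * f z), Finset.sum_comm]
  rw [Finset.sum_congr rfl (fun e (_ : e ∈ Finset.univ) => edge_sum e x f)]
  rw [← Finset.sum_sub_distrib]
  exact Finset.sum_congr rfl (fun e _ => by ring)


lemma inc_oth {e : G.E} {x : G.V} (h : G.inc e x) : G.inc e (G.oth e x) := by
  rcases endpoints_eq h with ⟨h1, h2⟩ | ⟨h1, h2⟩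
  exacts [Or.inr h2, Or.inl h1]

lemma oth_oth {e : G.E} {x : G.V} (h : G.inc e x) : G.oth e (G.oth e x) = x := by
  rcases endpoints_eq h with ⟨h1, h2⟩ | ⟨h1, h2⟩
  · have h3 : G.oth e x = G.snd e := h2.symm
    rw [h3]
    have h4 : G.oth e (G.snd e) = G.fst e := by
      simp only [oth]
      rw [if_neg (G.no_loop e)]
    rw [h4]
    exact h1
  · have h3 : G.oth e x = G.fst e := h1.symm
    rw [h3]
    have h4 : G.oth e (G.fst e) = G.snd e := by
      simp [oth]
    rw [h4]
    exact h2

noncomputable def cnt {α : Type*} [Fintype α] (p : α → Prop) : ℕ :=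
  (@Finset.filter α p (fun a => Classical.propDecidable _) Finset.univ).card

lemma cnt_congr {α : Type*} [Fintype α] {P Q : α → Prop} (h : ∀ a, P a ↔ Q a) :
    cnt P = cnt Q := by
  unfold cnt
  congr 1
  exact Finset.filter_congr (fun a _ => h a)

lemma cnt_eq_sum {α : Type*} [Fintype α] (p : α → Prop) :
    ((cnt p : ℕ) : ℝ) = ∑ a, ind (p a) := by
  unfold cnt
  rw [Finset.card_filter]
  push_cast
  exact Finset.sum_congr rfl (fun a _ => by by_cases h : p a <;> simp [ind, h])

lemma ind_split {c d : Prop} : ind c = ind (c ∧ d) + ind (c ∧ ¬ d) := by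
  by_cases hc : c <;> by_cases hd : d <;> simp [ind, hc, hd]

lemma cntR_split {α : Type*} [Fintype α] (P Q : α → Prop) :
    ((cnt P : ℕ) : ℝ) = (cnt (fun a => P a ∧ Q a) : ℝ) + (cnt (fun a => P a ∧ ¬ Q a) : ℝ) := by
  rw [cnt_eq_sum, cnt_eq_sum, cnt_eq_sum, ← Finset.sum_add_distrib]
  exact Finset.sum_congr rfl (fun a _ => ind_split)

lemma natCard_eq_cnt {α : Type*} [Fintype α] (p : α → Prop) :
    Nat.card {a // p a} = cnt p := by
  unfold cnt
  rw [Nat.card_eq_fintype_card, Fintype.card_subtype]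

lemma cnt_eq_zero {α : Type*} [Fintype α] {p : α → Prop} (h : ∀ a, ¬ p a) : cnt p = 0 :=
  Finset.card_eq_zero.mpr (Finset.eq_empty_of_forall_notMem
    (fun a ha => h a (Finset.mem_filter.mp ha).2))

lemma cnt_eq_one {α : Type*} [Fintype α] {p : α → Prop} {a : α} (ha : p a)
    (hu : ∀ b, p b → b = a) : cnt p = 1 := by
  refine Finset.card_eq_one.mpr ⟨a, ?_⟩
  ext b
  simp only [Finset.mem_filter, Finset.mem_univ, true_and, Finset.mem_singleton]
  exact ⟨fun hb => hu b hb, fun hb => hb ▸ ha⟩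

lemma tree_count' {T : Finset G.E} (hT : G.IsSpanningTree T) (x q : G.V) :
    cnt (fun e : G.E => e ∈ T ∧ G.inc e x ∧ ¬ G.reach (T.erase e) x q)
      = if x = q then 0 else 1 := by
  split
  · next h =>
    subst h
    exact cnt_eq_zero (fun e ⟨_, _, hc⟩ => hc (reach_refl _ x))
  · next h =>
    have hacy : G.ncomp T + T.card = Fintype.card G.V := by
      rw [hT.1]; have := hT.2; omega
    have hxq : G.reach T x q := reach_of_ncomp_le_one (le_of_eq hT.1) x q
    obtain ⟨e, he, hinc, hsep⟩ := exists_sep_edge T hacy hxq h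
    refine cnt_eq_one ⟨he, hinc, hsep⟩ (fun e' ⟨he'1, he'2, he'3⟩ => ?_)
    by_contra hne
    exact tree_sep_unique hT he'1 he hne he'2 hinc he'3 hsep

lemma forest_tree_bij {e : G.E} {x : G.V} (hinc : G.inc e x) (v q : G.V) :
    cnt (fun S : Finset G.E => (G.IsTwoForest S ∧ G.reach S x v
      ∧ ¬ G.reach S x q) ∧ ¬ G.reach S x (G.oth e x))
    = cnt (fun T : Finset G.E => G.IsSpanningTree T ∧ e ∈ T
      ∧ G.reach (T.erase e) x v ∧ G.reach (T.erase e) (G.oth e x) q) := by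
  unfold cnt
  refine Finset.card_bij (fun S _ => insert e S) ?_ ?_ ?_
  · intro S hS
    simp only [Finset.mem_filter, Finset.mem_univ, true_and] at hS ⊢
    obtain ⟨⟨htf, hxv, hxq⟩, hxw⟩ := hS
    have hnr : ¬ G.reach S (G.fst e) (G.snd e) := fun hc => hxw ((reach_oth_iff hinc).mp hc)
    obtain ⟨htree, heS⟩ := forest_insert htf hnr
    have herase : (insert e S).erase e = S := Finset.erase_insert heS
    refine ⟨htree, Finset.mem_insert_self e S, ?_, ?_⟩
    · rw [herase]; exact hxv
    · rw [herase]
      exact reach_of_ncomp_le_two (le_of_eq htf.1) hxw hxq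
  · intro S1 h1 S2 h2 heq
    simp only [Finset.mem_filter, Finset.mem_univ, true_and] at h1 h2
    have e1 : e ∉ S1 := fun hc => h1.2 (reach_edge_oth hc hinc)
    have e2 : e ∉ S2 := fun hc => h2.2 (reach_edge_oth hc hinc)
    have heq' : insert e S1 = insert e S2 := heq
    rw [← Finset.erase_insert e1, ← Finset.erase_insert e2, heq']
  · intro T hT
    simp only [Finset.mem_filter, Finset.mem_univ, true_and] at hT
    obtain ⟨htree, heT, hxv, hwq⟩ := hT
    obtain ⟨htf, hnr⟩ := tree_erase htree heT
    have hxw : ¬ G.reach (T.erase e) x (G.oth e x) := fun hc => hnr ((reach_oth_iff hinc).mpr hc)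
    refine ⟨T.erase e, ?_, Finset.insert_erase heT⟩
    simp only [Finset.mem_filter, Finset.mem_univ, true_and]
    exact ⟨⟨htf, hxv, fun hxq => hxw (reach_trans hxq (reach_symm hwq))⟩, hxw⟩

/-- Per-edge difference of together-counts equals difference of tree counts. -/
lemma tog_diff {e : G.E} {x : G.V} (hinc : G.inc e x) (v q : G.V) :
    (G.kappa2Tog x v q : ℝ) - (G.kappa2Tog (G.oth e x) v q : ℝ)
    = (cnt (fun T : Finset G.E => G.IsSpanningTree T ∧ e ∈ T
        ∧ G.reach (T.erase e) x v ∧ G.reach (T.erase e) (G.oth e x) q) : ℝ)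
      - (cnt (fun T : Finset G.E => G.IsSpanningTree T ∧ e ∈ T
        ∧ G.reach (T.erase e) (G.oth e x) v ∧ G.reach (T.erase e) x q) : ℝ) := by
  have hincw : G.inc e (G.oth e x) := inc_oth hinc
  have hothw : G.oth e (G.oth e x) = x := oth_oth hinc
  have hx : (G.kappa2Tog x v q : ℝ) =
      (cnt (fun S : Finset G.E => (G.IsTwoForest S ∧ G.reach S x v ∧ ¬ G.reach S x q) ∧ G.reach S x (G.oth e x)) : ℝ)
      + (cnt (fun S : Finset G.E => (G.IsTwoForest S ∧ G.reach S x v ∧ ¬ G.reach S x q) ∧ ¬ G.reach S x (G.oth e x)) : ℝ) := by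
    rw [kappa2Tog, natCard_eq_cnt]
    exact cntR_split _ _
  have hwx : (G.kappa2Tog (G.oth e x) v q : ℝ) =
      (cnt (fun S : Finset G.E => (G.IsTwoForest S ∧ G.reach S (G.oth e x) v ∧ ¬ G.reach S (G.oth e x) q) ∧ G.reach S (G.oth e x) x) : ℝ)
      + (cnt (fun S : Finset G.E => (G.IsTwoForest S ∧ G.reach S (G.oth e x) v ∧ ¬ G.reach S (G.oth e x) q) ∧ ¬ G.reach S (G.oth e x) x) : ℝ) := by
    rw [kappa2Tog, natCard_eq_cnt]
    exact cntR_split _ _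
  have hswap : cnt (fun S : Finset G.E => (G.IsTwoForest S ∧ G.reach S (G.oth e x) v ∧ ¬ G.reach S (G.oth e x) q) ∧ G.reach S (G.oth e x) x)
      = cnt (fun S : Finset G.E => (G.IsTwoForest S ∧ G.reach S x v ∧ ¬ G.reach S x q) ∧ G.reach S x (G.oth e x)) := by
    refine cnt_congr (fun S => ?_)
    constructor
    · rintro ⟨⟨h1, h2, h3⟩, h4⟩
      have h4' := reach_symm h4
      exact ⟨⟨h1, reach_trans h4' h2, fun hc => h3 (reach_trans h4 hc)⟩, h4'⟩
    · rintro ⟨⟨h1, h2, h3⟩, h4⟩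
      have h4' := reach_symm h4
      exact ⟨⟨h1, reach_trans h4' h2, fun hc => h3 (reach_trans h4 hc)⟩, h4'⟩
  have hB := forest_tree_bij hinc v q
  have hC := forest_tree_bij hincw v q
  rw [hothw] at hC
  rw [hx, hwx, hswap, hB, hC]
  ring


lemma lap_mul_tog (x v q : G.V) :
    ∑ z, G.lap x z * (G.kappa2Tog z v q : ℝ)
      = (G.kappa : ℝ) * (ind (x = v) - ind (x = q)) := by
  rw [lap_row_sum x (fun z => (G.kappa2Tog z v q : ℝ))]
  have step1 : ∀ e : G.E,
      ind (G.inc e x) * ((G.kappa2Tog x v q : ℝ) - (G.kappa2Tog (G.oth e x) v q : ℝ))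
      = ∑ T : Finset G.E, ind (G.IsSpanningTree T) *
          (ind (e ∈ T ∧ G.inc e x ∧ ¬ G.reach (T.erase e) x q)
           - ind (e ∈ T ∧ G.inc e x ∧ ¬ G.reach (T.erase e) x v)) := by
    intro e
    by_cases hinc : G.inc e x
    · rw [ind_pos hinc, one_mul, tog_diff hinc v q, cnt_eq_sum, cnt_eq_sum,
        ← Finset.sum_sub_distrib]
      refine Finset.sum_congr rfl (fun T _ => ?_)
      by_cases htree : G.IsSpanningTree T
      · have ht1 : ind (G.IsSpanningTree T) = 1 := ind_pos htree
        by_cases heT : e ∈ T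
        · obtain ⟨htf, hnr⟩ := tree_erase htree heT
          have hxw : ¬ G.reach (T.erase e) x (G.oth e x) :=
            fun hc => hnr ((reach_oth_iff hinc).mpr hc)
          have tri : ∀ {c : G.V}, ¬ G.reach (T.erase e) x c → G.reach (T.erase e) (G.oth e x) c :=
            fun hc => reach_of_ncomp_le_two (le_of_eq htf.1) hxw hc
          by_cases hv : G.reach (T.erase e) x v <;> by_cases hq : G.reach (T.erase e) x q
          · have l1 : ind (G.IsSpanningTree T ∧ e ∈ T ∧ G.reach (T.erase e) x v
                ∧ G.reach (T.erase e) (G.oth e x) q) = 0 :=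
              ind_neg (fun h => hxw (reach_trans hq (reach_symm h.2.2.2)))
            have l2 : ind (G.IsSpanningTree T ∧ e ∈ T ∧ G.reach (T.erase e) (G.oth e x) v
                ∧ G.reach (T.erase e) x q) = 0 :=
              ind_neg (fun h => hxw (reach_trans hv (reach_symm h.2.2.1)))
            have l3 : ind (e ∈ T ∧ G.inc e x ∧ ¬ G.reach (T.erase e) x q) = 0 :=
              ind_neg (fun h => h.2.2 hq)
            have l4 : ind (e ∈ T ∧ G.inc e x ∧ ¬ G.reach (T.erase e) x v) = 0 :=
              ind_neg (fun h => h.2.2 hv)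
            rw [l1, l2, l3, l4, ht1]
            ring
          · have l1 : ind (G.IsSpanningTree T ∧ e ∈ T ∧ G.reach (T.erase e) x v
                ∧ G.reach (T.erase e) (G.oth e x) q) = 1 :=
              ind_pos ⟨htree, heT, hv, tri hq⟩
            have l2 : ind (G.IsSpanningTree T ∧ e ∈ T ∧ G.reach (T.erase e) (G.oth e x) v
                ∧ G.reach (T.erase e) x q) = 0 :=
              ind_neg (fun h => hq h.2.2.2)
            have l3 : ind (e ∈ T ∧ G.inc e x ∧ ¬ G.reach (T.erase e) x q) = 1 :=
              ind_pos ⟨heT, hinc, hq⟩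
            have l4 : ind (e ∈ T ∧ G.inc e x ∧ ¬ G.reach (T.erase e) x v) = 0 :=
              ind_neg (fun h => h.2.2 hv)
            rw [l1, l2, l3, l4, ht1]
            ring
          · have l1 : ind (G.IsSpanningTree T ∧ e ∈ T ∧ G.reach (T.erase e) x v
                ∧ G.reach (T.erase e) (G.oth e x) q) = 0 :=
              ind_neg (fun h => hv h.2.2.1)
            have l2 : ind (G.IsSpanningTree T ∧ e ∈ T ∧ G.reach (T.erase e) (G.oth e x) v
                ∧ G.reach (T.erase e) x q) = 1 :=
              ind_pos ⟨htree, heT, tri hv, hq⟩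
            have l3 : ind (e ∈ T ∧ G.inc e x ∧ ¬ G.reach (T.erase e) x q) = 0 :=
              ind_neg (fun h => h.2.2 hq)
            have l4 : ind (e ∈ T ∧ G.inc e x ∧ ¬ G.reach (T.erase e) x v) = 1 :=
              ind_pos ⟨heT, hinc, hv⟩
            rw [l1, l2, l3, l4, ht1]
            ring
          · have l1 : ind (G.IsSpanningTree T ∧ e ∈ T ∧ G.reach (T.erase e) x v
                ∧ G.reach (T.erase e) (G.oth e x) q) = 0 :=
              ind_neg (fun h => hv h.2.2.1)
            have l2 : ind (G.IsSpanningTree T ∧ e ∈ T ∧ G.reach (T.erase e) (G.oth e x) v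
                ∧ G.reach (T.erase e) x q) = 0 :=
              ind_neg (fun h => hq h.2.2.2)
            have l3 : ind (e ∈ T ∧ G.inc e x ∧ ¬ G.reach (T.erase e) x q) = 1 :=
              ind_pos ⟨heT, hinc, hq⟩
            have l4 : ind (e ∈ T ∧ G.inc e x ∧ ¬ G.reach (T.erase e) x v) = 1 :=
              ind_pos ⟨heT, hinc, hv⟩
            rw [l1, l2, l3, l4, ht1]
            ring
        · have l1 : ind (G.IsSpanningTree T ∧ e ∈ T ∧ G.reach (T.erase e) x v
              ∧ G.reach (T.erase e) (G.oth e x) q) = 0 :=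
            ind_neg (fun h => heT h.2.1)
          have l2 : ind (G.IsSpanningTree T ∧ e ∈ T ∧ G.reach (T.erase e) (G.oth e x) v
              ∧ G.reach (T.erase e) x q) = 0 :=
            ind_neg (fun h => heT h.2.1)
          have l3 : ind (e ∈ T ∧ G.inc e x ∧ ¬ G.reach (T.erase e) x q) = 0 :=
            ind_neg (fun h => heT h.1)
          have l4 : ind (e ∈ T ∧ G.inc e x ∧ ¬ G.reach (T.erase e) x v) = 0 :=
            ind_neg (fun h => heT h.1)
          rw [l1, l2, l3, l4, ht1]
          ring
      · have l1 : ind (G.IsSpanningTree T ∧ e ∈ T ∧ G.reach (T.erase e) x v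
            ∧ G.reach (T.erase e) (G.oth e x) q) = 0 :=
          ind_neg (fun h => htree h.1)
        have l2 : ind (G.IsSpanningTree T ∧ e ∈ T ∧ G.reach (T.erase e) (G.oth e x) v
            ∧ G.reach (T.erase e) x q) = 0 :=
          ind_neg (fun h => htree h.1)
        have ht1 : ind (G.IsSpanningTree T) = 0 := ind_neg htree
        rw [l1, l2, ht1]
        ring
    · rw [ind_neg hinc, zero_mul]
      refine (Finset.sum_eq_zero (fun T _ => ?_)).symm
      have l3 : ind (e ∈ T ∧ G.inc e x ∧ ¬ G.reach (T.erase e) x q) = 0 :=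
        ind_neg (fun h => hinc h.2.1)
      have l4 : ind (e ∈ T ∧ G.inc e x ∧ ¬ G.reach (T.erase e) x v) = 0 :=
        ind_neg (fun h => hinc h.2.1)
      rw [l3, l4]
      ring
  rw [Finset.sum_congr rfl (fun e (_ : e ∈ Finset.univ) => step1 e), Finset.sum_comm]
  have step2 : ∀ T : Finset G.E,
      (∑ e : G.E, ind (G.IsSpanningTree T) *
        (ind (e ∈ T ∧ G.inc e x ∧ ¬ G.reach (T.erase e) x q)
         - ind (e ∈ T ∧ G.inc e x ∧ ¬ G.reach (T.erase e) x v)))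
      = ind (G.IsSpanningTree T) * (ind (x = v) - ind (x = q)) := by
    intro T
    by_cases htree : G.IsSpanningTree T
    · rw [Finset.sum_congr rfl (fun e (_ : e ∈ Finset.univ) => by rw [ind_pos htree, one_mul]),
        ind_pos htree, one_mul, Finset.sum_sub_distrib,
        ← cnt_eq_sum (fun e : G.E => e ∈ T ∧ G.inc e x ∧ ¬ G.reach (T.erase e) x q),
        ← cnt_eq_sum (fun e : G.E => e ∈ T ∧ G.inc e x ∧ ¬ G.reach (T.erase e) x v),
        tree_count' htree x q, tree_count' htree x v]
      have h1 : (((if x = q then 0 else 1 : ℕ)) : ℝ) = 1 - ind (x = q) := by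
        by_cases h : x = q <;> simp [ind, h]
      have h2 : (((if x = v then 0 else 1 : ℕ)) : ℝ) = 1 - ind (x = v) := by
        by_cases h : x = v <;> simp [ind, h]
      rw [h1, h2]
      ring
    · rw [Finset.sum_congr rfl (fun e (_ : e ∈ Finset.univ) => by rw [ind_neg htree, zero_mul]),
        ind_neg htree, zero_mul, Finset.sum_const, smul_zero]
  rw [Finset.sum_congr rfl (fun T (_ : T ∈ Finset.univ) => step2 T), ← Finset.sum_mul]
  congr 1
  rw [kappa, natCard_eq_cnt, cnt_eq_sum]



lemma tog_comm (a b c : G.V) : G.kappa2Tog a b c = G.kappa2Tog b a c := by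
  rw [kappa2Tog, kappa2Tog, natCard_eq_cnt, natCard_eq_cnt]
  exact cnt_congr (fun S =>
    ⟨fun ⟨h1, h2, h3⟩ => ⟨h1, reach_symm h2, fun hc => h3 (reach_trans h2 hc)⟩,
     fun ⟨h1, h2, h3⟩ => ⟨h1, reach_symm h2, fun hc => h3 (reach_trans h2 hc)⟩⟩)

lemma sep_decomp (x y q : G.V) :
    (G.kappa2Sep x q : ℝ) = (G.kappa2Tog x y q : ℝ) + (G.kappa2Tog y q x : ℝ) := by
  rw [kappa2Sep, natCard_eq_cnt, kappa2Tog, natCard_eq_cnt, kappa2Tog, natCard_eq_cnt]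
  rw [cntR_split (fun S => G.IsTwoForest S ∧ ¬ G.reach S x q) (fun S => G.reach S x y)]
  congr 1
  · norm_cast
    exact cnt_congr (fun S => by tauto)
  · norm_cast
    refine cnt_congr (fun S => ?_)
    constructor
    · rintro ⟨⟨h1, h2⟩, h3⟩
      exact ⟨h1, reach_of_ncomp_le_two (le_of_eq h1.1) h3 h2, fun hc => h3 (reach_symm hc)⟩
    · rintro ⟨h1, h2, h3⟩
      exact ⟨⟨h1, fun hc => h3 (reach_symm (reach_trans hc (reach_symm h2)))⟩,
        fun hc => h3 (reach_symm hc)⟩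

lemma lap_symm (x z : G.V) : G.lap x z = G.lap z x := by
  unfold lap
  have h1 : Nat.card {e : G.E // (G.fst e = x ∧ G.snd e = z) ∨ (G.fst e = z ∧ G.snd e = x)}
      = Nat.card {e : G.E // (G.fst e = z ∧ G.snd e = x) ∨ (G.fst e = x ∧ G.snd e = z)} := by
    rw [natCard_eq_cnt, natCard_eq_cnt]
    exact cnt_congr (fun e => or_comm)
  rw [h1]
  by_cases h : x = z
  · subst h; rfl
  · rw [if_neg h, if_neg (Ne.symm h)]

lemma lap_row_zero (x : G.V) : ∑ z, G.lap x z = 0 := by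
  have h := lap_row_sum (G := G) x (fun _ => (1:ℝ))
  calc ∑ z, G.lap x z = ∑ z, G.lap x z * 1 := by
        exact Finset.sum_congr rfl (fun z _ => (mul_one _).symm)
    _ = ∑ e : G.E, ind (G.inc e x) * (1 - 1) := h
    _ = 0 := Finset.sum_eq_zero (fun e _ => by ring)

lemma lap_col_zero (y : G.V) : ∑ z, G.lap z y = 0 := by
  rw [Finset.sum_congr rfl (fun z (_ : z ∈ Finset.univ) => lap_symm z y)]
  exact lap_row_zero y

lemma nonempty_V (hG : G.ncomp Finset.univ = 1) : Nonempty G.V := by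
  by_contra h
  rw [not_nonempty_iff] at h
  have he : IsEmpty (Quotient (Relation.EqvGen.setoid (G.step Finset.univ))) :=
    ⟨fun z => Quotient.inductionOn z (fun v => h.false v)⟩
  rw [ncomp, Nat.card_of_isEmpty] at hG
  exact one_ne_zero hG.symm

lemma kappa_pos (hG : G.ncomp Finset.univ = 1) : 0 < G.kappa := by
  obtain ⟨T, hT⟩ := exists_spanning_tree hG
  haveI : Nonempty {S : Finset G.E // G.IsSpanningTree S} := ⟨⟨T, hT⟩⟩
  exact Nat.card_pos

theorem main' (hG : G.ncomp Finset.univ = 1) :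
    G.lap + (1/2 : ℝ) • (G.lap * G.resMatrix * G.lap) = 0 := by
  obtain ⟨q⟩ := nonempty_V hG
  have hκ : (0:ℝ) < (G.kappa : ℝ) := by exact_mod_cast kappa_pos hG
  have hκ0 : (G.kappa : ℝ) ≠ 0 := ne_of_gt hκ
  have hharm : ∀ x w, ∑ u, G.lap x u * ((G.kappa2Tog u w q : ℝ) / (G.kappa : ℝ))
      = ind (x = w) - ind (x = q) := by
    intro x w
    calc ∑ u, G.lap x u * ((G.kappa2Tog u w q : ℝ) / (G.kappa : ℝ))
        = (∑ u, G.lap x u * (G.kappa2Tog u w q : ℝ)) / (G.kappa : ℝ) := by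
          rw [Finset.sum_div]
          exact Finset.sum_congr rfl (fun u _ => (mul_div_assoc _ _ _).symm)
      _ = ((G.kappa : ℝ) * (ind (x = w) - ind (x = q))) / (G.kappa : ℝ) := by
          rw [lap_mul_tog]
      _ = ind (x = w) - ind (x = q) := by
          rw [mul_comm, mul_div_assoc, div_self hκ0, mul_one]
  have hR : ∀ u w, G.resMatrix u w
      = (G.kappa2Sep u q : ℝ) / (G.kappa : ℝ) + (G.kappa2Sep w q : ℝ) / (G.kappa : ℝ)
        - 2 * ((G.kappa2Tog u w q : ℝ) / (G.kappa : ℝ)) := by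
    intro u w
    have h1 := sep_decomp (G := G) u w q
    have h2 := sep_decomp (G := G) w u q
    have h3 := sep_decomp (G := G) u q w
    have h4 : (G.kappa2Tog w u q : ℝ) = (G.kappa2Tog u w q : ℝ) :=
      congrArg Nat.cast (tog_comm w u q)
    have h5 : (G.kappa2Tog q w u : ℝ) = (G.kappa2Tog w q u : ℝ) :=
      congrArg Nat.cast (tog_comm q w u)
    have hsep : (G.kappa2Sep u w : ℝ)
        = (G.kappa2Sep u q : ℝ) + (G.kappa2Sep w q : ℝ) - 2 * (G.kappa2Tog u w q : ℝ) := by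
      linarith
    show (G.kappa2Sep u w : ℝ) / (G.kappa : ℝ) = _
    rw [hsep]
    ring
  ext x y
  simp only [Matrix.add_apply, Matrix.smul_apply, Matrix.zero_apply, smul_eq_mul]
  have key : ∀ w, (∑ u, G.lap x u * G.resMatrix u w)
      = (∑ u, G.lap x u * ((G.kappa2Sep u q : ℝ) / (G.kappa : ℝ)))
        - 2 * ind (x = w) + 2 * ind (x = q) := by
    intro w
    have expand : ∀ u, G.lap x u * G.resMatrix u w
        = G.lap x u * ((G.kappa2Sep u q : ℝ) / (G.kappa : ℝ))
          + G.lap x u * ((G.kappa2Sep w q : ℝ) / (G.kappa : ℝ))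
          - 2 * (G.lap x u * ((G.kappa2Tog u w q : ℝ) / (G.kappa : ℝ))) := by
      intro u
      rw [hR u w]
      ring
    rw [Finset.sum_congr rfl (fun u _ => expand u), Finset.sum_sub_distrib,
      Finset.sum_add_distrib, ← Finset.sum_mul, lap_row_zero, zero_mul, add_zero,
      ← Finset.mul_sum, hharm x w]
    ring
  have hmul : (G.lap * G.resMatrix * G.lap) x y = -2 * G.lap x y := by
    rw [Matrix.mul_apply]
    have h6 : ∀ w, (G.lap * G.resMatrix) x w * G.lap w y
        = ((∑ u, G.lap x u * ((G.kappa2Sep u q : ℝ) / (G.kappa : ℝ))) + 2 * ind (x = q)) * G.lap w y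
          - 2 * (ind (x = w) * G.lap w y) := by
      intro w
      rw [Matrix.mul_apply, key w]
      ring
    have e1 : ∑ w, ((∑ u, G.lap x u * ((G.kappa2Sep u q : ℝ) / (G.kappa : ℝ)))
        + 2 * ind (x = q)) * G.lap w y = 0 := by
      rw [← Finset.mul_sum, lap_col_zero, mul_zero]
    have e2 : ∑ w, 2 * (ind (x = w) * G.lap w y) = 2 * G.lap x y := by
      rw [← Finset.mul_sum, sum_ind_eq x (fun w => G.lap w y)]
    rw [Finset.sum_congr rfl (fun w _ => h6 w), Finset.sum_sub_distrib, e1, e2]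
    ring
  rw [hmul]
  ring


end Multigraph

theorem neg_half_res_generalized_inverse (G : Multigraph) (hG : G.IsConnected) :
    G.lap + (1/2 : ℝ) • (G.lap * G.resMatrix * G.lap) = 0 :=
  Multigraph.main' hG
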